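/- arXiv:1812.05680 — 2 statements merged into one kernel-verified Lean document; each statement's English description precedes it below -/
import Mathlib

section
/- Suppose each word B_j (for j in a finite index set J) has the form B_j = (U s^c)^{t_j} U s^{l_j} with t_j > 0 and 0 ≤ l_j ≤ c, where U is a nonempty word that neither begins nor ends with s. Suppose B' is formed as a concatenation B' = B_{j_1} s^{a_1} B_{j_2} s^{a_2} ... B_{j_m} s^{a_m} where a_i = c − l_{j_i} for all i < m and a_m ≤ c − l_{j_m}. Then B' = (U s^c)^{t'} U s^{l'} where t' = m − 1 + Σ_{i=1}^m t_{j_i} and l' = l_{j_m} + a_m ≤ c. -/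
/-!
The deficit condition pads the tail `s^(l_i)` of every block but the last to `s^c`, which turns
`(U s^c)^(t_i) U s^(l_i) s^(c - l_i)` into the pure power `(U s^c)^(t_i + 1)`; these powers
merge, and the last block only contributes its `t_m` periods and its tail `U s^(l_m + a_m)`.
-/

/-- `wpow w i` is the `i`-fold concatenation of the word `w` with itself. -/
def wpow {A : Type*} (w : List A) (i : ℕ) : List A := (List.replicate i w).flatten

section wpow

variable {A : Type*} (w : List A)

lemma wpow_add (x y : ℕ) : wpow w (x + y) = wpow w x ++ wpow w y := by
  rw [wpow, wpow, wpow, List.replicate_add, List.flatten_append]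

lemma wpow_succ (n : ℕ) : wpow w (n + 1) = wpow w n ++ w := by
  rw [wpow_add]
  simp [wpow]

lemma flatten_map_range_wpow (g : ℕ → ℕ) (n : ℕ) :
    ((List.range n).map fun i => wpow w (g i)).flatten = wpow w (∑ i ∈ Finset.range n, g i) := by
  induction n with
  | zero => simp [wpow]
  | succ n ih =>
    rw [List.range_succ, List.map_append, List.flatten_append, ih, Finset.sum_range_succ,
      wpow_add]
    simp

end wpow

lemma wpow_append_replicate_pad {A : Type*} (s : A) (U : List A) {c l : ℕ} (hl : l ≤ c)
    (t : ℕ) :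
    wpow (U ++ List.replicate c s) t ++ U ++ List.replicate l s ++ List.replicate (c - l) s
      = wpow (U ++ List.replicate c s) (t + 1) := by
  rw [wpow_succ, List.append_assoc _ (List.replicate l s), ← List.replicate_add,
    Nat.add_sub_cancel' hl, List.append_assoc]

theorem local_deficit_concatenation_general {A : Type*} (s : A) (U : List A)
    (c : ℕ) (m : ℕ) (hm : 0 < m) (t l a : ℕ → ℕ)
    (hl : ∀ i < m, l i ≤ c)
    (ha : ∀ i, i + 1 < m → a i = c - l i)
    (hlast : a (m - 1) ≤ c - l (m - 1)) :
    ((List.range m).map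
        (fun i => wpow (U ++ List.replicate c s) (t i) ++ U ++ List.replicate (l i) s
          ++ List.replicate (a i) s)).flatten
      = wpow (U ++ List.replicate c s) ((m - 1) + ∑ i ∈ Finset.range m, t i)
          ++ U ++ List.replicate (l (m - 1) + a (m - 1)) s
      ∧ l (m - 1) + a (m - 1) ≤ c := by
  obtain ⟨n, rfl⟩ : ∃ n, m = n + 1 := ⟨m - 1, (Nat.succ_pred_eq_of_pos hm).symm⟩
  rw [Nat.add_sub_cancel] at hlast ⊢
  refine ⟨?_, by have := hl n n.lt_succ_self; omega⟩
  have full_blocks : ∀ i ∈ List.range n,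
      wpow (U ++ List.replicate c s) (t i) ++ U ++ List.replicate (l i) s
        ++ List.replicate (a i) s = wpow (U ++ List.replicate c s) (t i + 1) := by
    intro i hi
    have hi : i + 1 < n + 1 := Nat.succ_lt_succ (List.mem_range.mp hi)
    rw [ha i hi, wpow_append_replicate_pad s U (hl i (Nat.lt_of_succ_lt hi))]
  have periods : n + ∑ i ∈ Finset.range (n + 1), t i = ∑ i ∈ Finset.range n, (t i + 1) + t n := by
    rw [Finset.sum_range_succ, Finset.sum_add_distrib, Finset.sum_const, Finset.card_range,
      smul_eq_mul, mul_one]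
    omega
  rw [List.range_succ, List.map_append, List.flatten_append, List.map_congr_left full_blocks,
    flatten_map_range_wpow, periods, wpow_add]
  simp only [List.map_cons, List.map_nil, List.flatten_cons, List.flatten_nil, List.append_nil,
    List.append_assoc, List.replicate_add]

/-- Concatenating semi-periodic blocks `B_i = (U s^c)^{t_i} U s^{l_i}` according to the
local deficit condition yields a semi-periodic block
`(U s^c)^{m-1+Σ t_i} U s^{l_m + a_m}`. -/
theorem local_deficit_concatenation {A : Type*} (s : A) (U : List A)
    (hU : U ≠ []) (hUhead : U.head? ≠ some s) (hUlast : U.getLast? ≠ some s)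
    (c : ℕ) (m : ℕ) (hm : 0 < m) (t l a : ℕ → ℕ)
    (ht : ∀ i < m, 0 < t i) (hl : ∀ i < m, l i ≤ c)
    (ha : ∀ i, i + 1 < m → a i = c - l i)
    (hlast : a (m - 1) ≤ c - l (m - 1)) :
    ((List.range m).map
        (fun i => wpow (U ++ List.replicate c s) (t i) ++ U ++ List.replicate (l i) s
          ++ List.replicate (a i) s)).flatten
      = wpow (U ++ List.replicate c s) ((m - 1) + ∑ i ∈ Finset.range m, t i)
          ++ U ++ List.replicate (l (m - 1) + a (m - 1)) s
      ∧ l (m - 1) + a (m - 1) ≤ c :=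
  local_deficit_concatenation_general s U c m hm t l a hl ha hlast
end

section
/- If every word B in a family satisfies B = (U s^c)^{t_B} U s^{l_B} with l_B ≤ c (semi-periodicity with common U and c), then the total number of trailing s's at the end of any concatenation B_{j_1} s^{a_1} ... B_{j_m} s^{a_m} satisfying the local deficit condition (a_i = c − l_{j_i} for i < m and a_m ≤ c − l_{j_m}) is at most c. Consequently runs of consecutive s's in such concatenations never exceed c. -/
namespace List

variable {A : Type*}

theorem le_of_replicate_suffix_append_replicate {s : A} {V : List A}
    (hV : V.getLast? ≠ some s) {r k : ℕ} (h : replicate r s <:+ V ++ replicate k s) :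
    r ≤ k := by
  induction k generalizing r with
  | zero =>
    rcases r with _ | r
    · rfl
    · rw [replicate_zero, append_nil, replicate_succ'] at h
      have hs : [s] <:+ V := (suffix_append (replicate r s) [s]).trans h
      exact absurd (singleton_suffix_iff_getLast?_eq_some.mp hs) hV
  | succ k ih =>
    rcases r with _ | r
    · exact Nat.zero_le _
    · rw [replicate_succ', replicate_succ', ← append_assoc, suffix_append_self_iff] at h
      exact Nat.succ_le_succ (ih h)

theorem flatten_map_range_succ (f : ℕ → List A) (n : ℕ) :
    ((range (n + 1)).map f).flatten = ((range n).map f).flatten ++ f n := by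
  rw [range_succ, map_append, flatten_append, map_singleton, flatten_singleton]

end List

theorem trailing_spacers_bounded_general {A : Type*} (s : A) (U : List A)
    (hU : U ≠ []) (hUlast : U.getLast? ≠ some s)
    (c : ℕ) (m : ℕ) (hm : 0 < m) (t l a : ℕ → ℕ)
    (hl : ∀ i < m, l i ≤ c)
    (hlast : a (m - 1) ≤ c - l (m - 1)) :
    ∀ r : ℕ,
      (List.replicate r s) <:+
        ((List.range m).map
          (fun i => wpow (U ++ List.replicate c s) (t i) ++ U
            ++ List.replicate (l i) s ++ List.replicate (a i) s)).flatten
      → r ≤ c := by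
  intro r hr
  obtain ⟨n, rfl⟩ : ∃ n, m = n + 1 := ⟨m - 1, by omega⟩
  set P := ((List.range n).map fun i => wpow (U ++ List.replicate c s) (t i) ++ U
    ++ List.replicate (l i) s ++ List.replicate (a i) s).flatten
    ++ wpow (U ++ List.replicate c s) (t n)
  have hsplit : List.replicate r s <:+ (P ++ U) ++ List.replicate (l n + a n) s := by
    rw [List.flatten_map_range_succ] at hr
    simpa only [List.replicate_add, List.append_assoc, P] using hr
  have hPU : (P ++ U).getLast? ≠ some s := List.getLast?_append_of_ne_nil P hU ▸ hUlast
  have hdeficit : l n + a n ≤ c := by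
    have := hl n (by omega)
    simp only [Nat.add_sub_cancel] at hlast
    omega
  exact (List.le_of_replicate_suffix_append_replicate hPU hsplit).trans hdeficit

/-- In a concatenation of semi-periodic blocks satisfying the local deficit condition,
the trailing run of `s`'s has length at most `c`. -/
theorem trailing_spacers_bounded {A : Type*} (s : A) (U : List A)
    (hU : U ≠ []) (hUhead : U.head? ≠ some s) (hUlast : U.getLast? ≠ some s)
    (c : ℕ) (m : ℕ) (hm : 0 < m) (t l a : ℕ → ℕ)
    (ht : ∀ i < m, 0 < t i) (hl : ∀ i < m, l i ≤ c)
    (ha : ∀ i, i + 1 < m → a i = c - l i)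
    (hlast : a (m - 1) ≤ c - l (m - 1)) :
    ∀ r : ℕ,
      (List.replicate r s) <:+
        ((List.range m).map
          (fun i => wpow (U ++ List.replicate c s) (t i) ++ U
            ++ List.replicate (l i) s ++ List.replicate (a i) s)).flatten
      → r ≤ c :=
  trailing_spacers_bounded_general s U hU hUlast c m hm t l a hl hlast
end
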